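/- Let X, Y be independent standard normal random variables, let k ∈ (0,1], and define C_k = 1 if X + kY ≥ 0 and C_k = 0 otherwise. Then MI(C_k, Y) equals ∫_ℝ φ(y)·Φ(k·y)·log(2·Φ(k·y)) dy + ∫_ℝ φ(y)·Φ(−k·y)·log(2·Φ(−k·y)) dy, where φ and Φ denote the density and cumulative distribution function of the standard normal distribution and log is the natural logarithm. -/

import Mathlib

open MeasureTheory ProbabilityTheory Real
open scoped Classical

/-- Kullback–Leibler divergence of `μ` from `ν` (with values in `EReal`),
defined as `+∞` unless `μ ≪ ν` and the log-likelihood ratio is `μ`-integrable. -/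
noncomputable def klDiv {α : Type*} [MeasurableSpace α] (μ ν : Measure α) : EReal :=
  if μ ≪ ν ∧ Integrable (llr μ ν) μ then ((∫ x, llr μ ν x ∂μ : ℝ) : EReal) else ⊤

/-- The uniform probability measure on the interval `[-δ, δ]`. -/
noncomputable def uniformIcc (δ : ℝ) : Measure ℝ :=
  (ENNReal.ofReal (2 * δ))⁻¹ • volume.restrict (Set.Icc (-δ) δ)

/-!
Conditionally on `Y = y`, the class `C_k` is `1` with probability `Φ(k y)` and `0` with
probability `Φ(-k y)`. Averaging over `y`, the symmetry `y ↦ -y` of `N(0,1)` together with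
`Φ(x) + Φ(-x) = 1` makes `C_k` a fair coin. So the joint law of `(C_k, Y)` has density
`2 Φ(±k y)` with respect to the product of the marginals, and the mutual information is
`∫ f log f` for this bounded density `f`, against the fair coin times `N(0,1)`.
-/

open Set
open scoped ENNReal NNReal

lemma abs_mul_log_le_one_add_sq {x : ℝ} (hx : 0 ≤ x) : |x * log x| ≤ 1 + x ^ 2 := by
  have hlow := self_sub_one_le_mul_log hx
  have hup : x * log x ≤ x * (x - 1) := by
    rcases hx.eq_or_lt with rfl | hpos
    · simp
    · exact mul_le_mul_of_nonneg_left (log_le_sub_one_of_pos hpos) hx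
  rw [abs_le]
  constructor <;> nlinarith

lemma integrable_mul_log_of_le {α : Type*} [MeasurableSpace α] {ν : Measure α}
    [IsFiniteMeasure ν] {f : α → ℝ} {B : ℝ} (hf : Measurable f) (hf0 : ∀ x, 0 ≤ f x)
    (hfB : ∀ x, f x ≤ B) :
    Integrable (fun x => f x * log (f x)) ν := by
  refine .of_bound (hf.mul (measurable_log.comp hf)).aestronglyMeasurable (1 + B ^ 2)
    (ae_of_all _ fun x => ?_)
  rw [Real.norm_eq_abs]
  exact (abs_mul_log_le_one_add_sq (hf0 x)).trans (by gcongr; exacts [hf0 x, hfB x])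

lemma klDiv_withDensity_ofReal {α : Type*} [MeasurableSpace α] {ν : Measure α} [SigmaFinite ν]
    {f : α → ℝ} (hf : Measurable f) (hf0 : ∀ x, 0 ≤ f x)
    (hint : Integrable (fun x => f x * log (f x)) ν) :
    klDiv (ν.withDensity fun x => ENNReal.ofReal (f x)) ν
      = ((∫ x, f x * log (f x) ∂ν : ℝ) : EReal) := by
  set μ := ν.withDensity fun x => ENNReal.ofReal (f x)
  have hac : μ ≪ ν := withDensity_absolutelyContinuous _ _
  have hmul : (fun x => (μ.rnDeriv ν x).toReal * log (μ.rnDeriv ν x).toReal)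
      =ᵐ[ν] fun x => f x * log (f x) := by
    filter_upwards [Measure.rnDeriv_withDensity ν hf.ennreal_ofReal] with x hx
    rw [hx, ENNReal.toReal_ofReal (hf0 x)]
  rw [klDiv, if_pos ⟨hac, (integrable_rnDeriv_mul_log_iff hac).1 (hint.congr hmul.symm)⟩,
    ← integral_rnDeriv_mul_log hac, integral_congr_ae hmul]

lemma measure_Iio_eq_ofReal_cdf {μ : Measure ℝ} [IsProbabilityMeasure μ] [NullSingletonClass μ]
    (a : ℝ) : μ (Iio a) = ENNReal.ofReal (cdf μ a) := by
  rw [ofReal_cdf, measure_congr Iio_ae_eq_Iic]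

lemma gaussianReal_zero_Ici {v : ℝ≥0} (a : ℝ) :
    gaussianReal 0 v (Ici a) = ENNReal.ofReal (cdf (gaussianReal 0 v) (-a)) := by
  conv_lhs => rw [← neg_zero, ← gaussianReal_map_neg]
  rw [ofReal_cdf, Measure.map_apply measurable_neg measurableSet_Ici]
  congr 1
  ext x; simp

lemma cdf_gaussianReal_zero_neg {v : ℝ≥0} (hv : v ≠ 0) (x : ℝ) :
    cdf (gaussianReal 0 v) (-x) = 1 - cdf (gaussianReal 0 v) x := by
  have := nullSingletonClass_gaussianReal (μ := 0) hv
  rw [← ENNReal.ofReal_eq_ofReal_iff (cdf_nonneg _ _) (sub_nonneg.2 (cdf_le_one _ _)),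
    ← gaussianReal_zero_Ici, ENNReal.ofReal_sub _ (cdf_nonneg _ _), ofReal_cdf,
    ENNReal.ofReal_one, ← prob_compl_eq_one_sub measurableSet_Iic, compl_Iic,
    measure_congr Ioi_ae_eq_Ici]

lemma integral_Iic_gaussianPDFReal (μ : ℝ) {v : ℝ≥0} (hv : v ≠ 0) (x : ℝ) :
    ∫ y in Iic x, gaussianPDFReal μ v y = cdf (gaussianReal μ v) x := by
  rw [← ENNReal.ofReal_eq_ofReal_iff (setIntegral_nonneg measurableSet_Iic
    fun y _ => gaussianPDFReal_nonneg μ v y) (cdf_nonneg _ _), ofReal_cdf,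
    gaussianReal_apply_eq_integral μ hv]

lemma map_ite_eq_smul_dirac_add {α β : Type*} [MeasurableSpace α] [MeasurableSpace β]
    [MeasurableSingletonClass β] (μ : Measure α) {p : α → Prop} [DecidablePred p]
    (hp : MeasurableSet {x | p x}) (a b : β) :
    μ.map (fun x => if p x then a else b)
      = μ {x | p x} • .dirac a + μ {x | ¬p x} • .dirac b := by
  ext s hs
  rw [Measure.map_apply (Measurable.ite hp measurable_const measurable_const) hs]
  by_cases ha : a ∈ s <;> by_cases hb : b ∈ s <;>
    simp [ha, hb, preimage, apply_ite (· ∈ s), ← compl_ofPred, measure_add_measure_compl hp]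

noncomputable def fairCoin : Measure ℕ := (2⁻¹ : ℝ≥0∞) • (.dirac 1 + .dirac 0)

instance : IsProbabilityMeasure fairCoin :=
  ⟨by simp [fairCoin, ← two_mul, ENNReal.mul_inv_cancel two_ne_zero ENNReal.ofNat_ne_top]⟩

lemma fairCoin_withDensity (f : ℕ → ℝ≥0∞) :
    fairCoin.withDensity f = (2⁻¹ * f 1) • .dirac 1 + (2⁻¹ * f 0) • .dirac 0 := by
  rw [fairCoin, withDensity_smul_measure, withDensity_add_measure, dirac_withDensity,
    dirac_withDensity, smul_add, smul_smul, smul_smul]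

lemma integral_fairCoin {E : Type*} [NormedAddCommGroup E] [NormedSpace ℝ E] [CompleteSpace E]
    (h : ℕ → E) :
    ∫ c, h c ∂fairCoin = (2⁻¹ : ℝ) • (h 1 + h 0) := by
  rw [fairCoin, integral_smul_measure, integral_add_measure (integrable_dirac enorm_lt_top)
    (integrable_dirac enorm_lt_top), integral_dirac, integral_dirac]
  simp

-- The density of the joint law of `(C_k, Y)` with respect to `fairCoin ⊗ N(0,1)`; its values
-- at `c ∉ {0, 1}` are irrelevant since `fairCoin` does not charge them.
noncomputable def classDensity (k : ℝ) (p : ℕ × ℝ) : ℝ :=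
  2 * cdf (gaussianReal 0 1) (if p.1 = 1 then k * p.2 else -(k * p.2))

lemma classDensity_nonneg (k : ℝ) (p : ℕ × ℝ) : 0 ≤ classDensity k p :=
  mul_nonneg zero_le_two (cdf_nonneg _ _)

lemma classDensity_le_two (k : ℝ) (p : ℕ × ℝ) : classDensity k p ≤ 2 :=
  mul_le_of_le_one_right zero_le_two (cdf_le_one _ _)

lemma measurable_classDensity (k : ℝ) : Measurable (classDensity k) :=
  ((cdf _).mono.measurable.comp (Measurable.ite (measurable_fst (measurableSet_singleton 1))
    (by fun_prop) (by fun_prop))).const_mul 2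

lemma map_ite_gaussianReal_eq_fairCoin_withDensity (k y : ℝ) :
    (gaussianReal 0 1).map (fun x => if 0 ≤ x + k * y then 1 else 0)
      = fairCoin.withDensity fun c => ENNReal.ofReal (classDensity k (c, y)) := by
  have hIci : {x : ℝ | 0 ≤ x + k * y} = Ici (-(k * y)) := by ext x; simp [neg_le_iff_add_nonneg]
  have hIio : {x : ℝ | ¬0 ≤ x + k * y} = Iio (-(k * y)) := by ext x; simp [lt_neg_iff_add_neg]
  have := nullSingletonClass_gaussianReal (μ := 0) one_ne_zero
  rw [map_ite_eq_smul_dirac_add _ (measurableSet_le measurable_const (measurable_add_const _)),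
    fairCoin_withDensity, hIci, hIio, gaussianReal_zero_Ici, measure_Iio_eq_ofReal_cdf, neg_neg]
  simp only [classDensity, if_true, zero_ne_one, if_false, ENNReal.ofReal_mul zero_le_two,
    ENNReal.ofReal_ofNat, ← mul_assoc, ENNReal.inv_mul_cancel two_ne_zero ENNReal.ofNat_ne_top,
    one_mul]

noncomputable def classPair (k : ℝ) (p : ℝ × ℝ) : ℕ × ℝ :=
  (if 0 ≤ p.1 + k * p.2 then 1 else 0, p.2)

lemma measurable_classPair (k : ℝ) : Measurable (classPair k) :=
  (Measurable.ite (measurableSet_le measurable_const (by fun_prop)) measurable_const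
    measurable_const).prodMk measurable_snd

lemma map_classPair_gaussianReal (k : ℝ) :
    ((gaussianReal 0 1).prod (gaussianReal 0 1)).map (classPair k)
      = (fairCoin.prod (gaussianReal 0 1)).withDensity
          fun p => ENNReal.ofReal (classDensity k p) := by
  refine Measure.ext_prod fun {s t} hs ht => ?_
  have hmeas := (measurable_classDensity k).ennreal_ofReal
  have hslice (y : ℝ) : gaussianReal 0 1 ((fun x => (x, y)) ⁻¹' (classPair k ⁻¹' s ×ˢ t))
      = t.indicator (fun y => (fairCoin.withDensity
          fun c => ENNReal.ofReal (classDensity k (c, y))) s) y := by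
    by_cases hy : y ∈ t
    · rw [indicator_of_mem hy, ← map_ite_gaussianReal_eq_fairCoin_withDensity,
        Measure.map_apply (Measurable.ite (measurableSet_le measurable_const
          (measurable_add_const _)) measurable_const measurable_const) hs]
      simp [classPair, hy, preimage]
    · simp [classPair, hy, preimage]
  rw [Measure.map_apply (measurable_classPair k) (hs.prod ht),
    Measure.prod_apply_symm (measurable_classPair k (hs.prod ht)),
    withDensity_apply _ (hs.prod ht), ← Measure.prod_restrict,
    lintegral_prod_symm _ hmeas.aemeasurable]
  simp_rw [hslice, withDensity_apply _ hs]
  rw [lintegral_indicator ht]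

lemma lintegral_cdf_gaussianReal_mul (k : ℝ) :
    ∫⁻ y, ENNReal.ofReal (cdf (gaussianReal 0 1) (k * y)) ∂gaussianReal 0 1 = 2⁻¹ := by
  have hmeas : Measurable fun y => ENNReal.ofReal (cdf (gaussianReal 0 1) (k * y)) :=
    ((cdf _).mono.measurable.comp (measurable_const_mul k)).ennreal_ofReal
  have hneg : MeasurePreserving (fun y : ℝ => -y) (gaussianReal 0 1) (gaussianReal 0 1) :=
    ⟨measurable_neg, by rw [gaussianReal_map_neg, neg_zero]⟩
  have hsum : ∫⁻ y, ENNReal.ofReal (cdf (gaussianReal 0 1) (k * y)) ∂gaussianReal 0 1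
      + ∫⁻ y, ENNReal.ofReal (cdf (gaussianReal 0 1) (k * -y)) ∂gaussianReal 0 1 = 1 := by
    rw [← lintegral_add_left hmeas]
    simp_rw [mul_neg, cdf_gaussianReal_zero_neg one_ne_zero, ← ENNReal.ofReal_add (cdf_nonneg _ _)
      (sub_nonneg.2 (cdf_le_one _ _)), add_sub_cancel, ENNReal.ofReal_one, lintegral_const,
      measure_univ, mul_one]
  rw [hneg.lintegral_comp hmeas, ← mul_two] at hsum
  exact ENNReal.eq_inv_of_mul_eq_one_left hsum

lemma map_ite_gaussianReal_prod_eq_fairCoin (k : ℝ) :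
    ((gaussianReal 0 1).prod (gaussianReal 0 1)).map
      (fun p : ℝ × ℝ => if 0 ≤ p.1 + k * p.2 then 1 else 0) = fairCoin := by
  have hmeas : MeasurableSet {p : ℝ × ℝ | 0 ≤ p.1 + k * p.2} :=
    measurableSet_le measurable_const (by fun_prop)
  have hhalf : ((gaussianReal 0 1).prod (gaussianReal 0 1)) {p | 0 ≤ p.1 + k * p.2} = 2⁻¹ := by
    rw [Measure.prod_apply_symm hmeas, ← lintegral_cdf_gaussianReal_mul k]
    refine lintegral_congr fun y => ?_
    rw [← neg_neg (k * y), ← gaussianReal_zero_Ici]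
    congr 1; ext x; simp [neg_le_iff_add_nonneg]
  rw [map_ite_eq_smul_dirac_add _ hmeas, ← compl_ofPred, prob_compl_eq_one_sub hmeas, hhalf,
    ENNReal.one_sub_inv_two, fairCoin, smul_add]

lemma integral_classDensity_mul_log (k : ℝ) :
    ∫ p, classDensity k p * log (classDensity k p) ∂(fairCoin.prod (gaussianReal 0 1))
      = (∫ y, gaussianPDFReal 0 1 y * cdf (gaussianReal 0 1) (k * y)
            * log (2 * cdf (gaussianReal 0 1) (k * y)))
        + ∫ y, gaussianPDFReal 0 1 y * cdf (gaussianReal 0 1) (-(k * y))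
            * log (2 * cdf (gaussianReal 0 1) (-(k * y))) := by
  rw [integral_prod _ (integrable_mul_log_of_le (measurable_classDensity k)
      (classDensity_nonneg k)
      (classDensity_le_two k)),
    integral_fairCoin]
  simp only [classDensity, if_true, zero_ne_one, if_false,
    integral_gaussianReal_eq_integral_smul one_ne_zero, smul_eq_mul]
  have hpull (a b c : ℝ) : a * (2 * b * c) = 2 * (a * b * c) := by ring
  simp_rw [hpull, integral_const_mul]
  ring

theorem stmt_18_general {Ω : Type*} [MeasurableSpace Ω] (P : Measure Ω) [IsProbabilityMeasure P]
    (k : ℝ)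
    (X Y : Ω → ℝ) (hX : Measurable X) (hY : Measurable Y)
    (hindep : IndepFun X Y P)
    (hXlaw : P.map X = gaussianReal 0 1) (hYlaw : P.map Y = gaussianReal 0 1)
    (C : Ω → ℕ) (hC : C = fun ω => if 0 ≤ X ω + k * Y ω then 1 else 0)
    (φ : ℝ → ℝ) (hφ : φ = fun y => (Real.sqrt (2 * Real.pi))⁻¹ * Real.exp (-(y ^ 2) / 2))
    (Φ : ℝ → ℝ) (hΦ : Φ = fun x => ∫ y in Set.Iic x, φ y) :
    klDiv (P.map (fun ω => (C ω, Y ω))) ((P.map C).prod (P.map Y))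
      = (((∫ y : ℝ, φ y * Φ (k * y) * Real.log (2 * Φ (k * y)))
            + ∫ y : ℝ, φ y * Φ (-(k * y)) * Real.log (2 * Φ (-(k * y))) : ℝ) : EReal) := by
  have hφN : φ = gaussianPDFReal 0 1 := by
    rw [hφ]; ext y; simp [gaussianPDFReal]
  have hΦN : Φ = cdf (gaussianReal 0 1) := by
    rw [hΦ, hφN]; ext x; exact integral_Iic_gaussianPDFReal 0 one_ne_zero x
  have hXY : P.map (fun ω => (X ω, Y ω)) = (gaussianReal 0 1).prod (gaussianReal 0 1) := by
    rw [(indepFun_iff_map_prod_eq_prod_map_map hX.aemeasurable hY.aemeasurable).1 hindep,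
      hXlaw, hYlaw]
  have hjoint : P.map (fun ω => (C ω, Y ω))
      = ((gaussianReal 0 1).prod (gaussianReal 0 1)).map (classPair k) := by
    rw [← hXY, Measure.map_map (measurable_classPair k) (hX.prodMk hY), hC]; rfl
  have hclass : P.map C = fairCoin := by
    rw [← map_ite_gaussianReal_prod_eq_fairCoin k, ← hXY, Measure.map_map _ (hX.prodMk hY), hC]
    · rfl
    · exact (measurable_classPair k).fst
  rw [hjoint, hclass, hYlaw, map_classPair_gaussianReal, klDiv_withDensity_ofReal
    (measurable_classDensity k) (classDensity_nonneg k)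
    (integrable_mul_log_of_le (measurable_classDensity k)
      (classDensity_nonneg k)
      (classDensity_le_two k)),
    integral_classDensity_mul_log, hφN, hΦN]

theorem stmt_18 {Ω : Type*} [MeasurableSpace Ω] (P : Measure Ω) [IsProbabilityMeasure P]
    (k : ℝ) (hk : k ∈ Set.Ioc (0 : ℝ) 1)
    (X Y : Ω → ℝ) (hX : Measurable X) (hY : Measurable Y)
    (hindep : IndepFun X Y P)
    (hXlaw : P.map X = gaussianReal 0 1) (hYlaw : P.map Y = gaussianReal 0 1)
    (C : Ω → ℕ) (hC : C = fun ω => if 0 ≤ X ω + k * Y ω then 1 else 0)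
    (φ : ℝ → ℝ) (hφ : φ = fun y => (Real.sqrt (2 * Real.pi))⁻¹ * Real.exp (-(y ^ 2) / 2))
    (Φ : ℝ → ℝ) (hΦ : Φ = fun x => ∫ y in Set.Iic x, φ y) :
    klDiv (P.map (fun ω => (C ω, Y ω))) ((P.map C).prod (P.map Y))
      = (((∫ y : ℝ, φ y * Φ (k * y) * Real.log (2 * Φ (k * y)))
            + ∫ y : ℝ, φ y * Φ (-(k * y)) * Real.log (2 * Φ (-(k * y))) : ℝ) : EReal) :=
  stmt_18_general P k X Y hX hY hindep hXlaw hYlaw C hC φ hφ Φ hΦ
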